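/- (Inverse of M.) Let Φ = (w₁,w₂) : Ω → Ω' be a biholomorphism between open subsets of ℂ² with inverse Ψ = (x,y) : Ω' → Ω. Then for every p ∈ Ω, the matrix M(w₁,w₂;x,y)(p) is invertible and M(w₁,w₂;x,y)(p)⁻¹ = M(x,y;w₁,w₂)(Φ(p)), i.e. M(w₁,w₂;x,y)(p) · M(x,y;w₁,w₂)(Φ(p)) = I₄, where M(x,y;w₁,w₂) is the matrix M formed from the partial derivatives of the inverse map with respect to (w₁,w₂). -/

import Mathlib

open Complex Matrix

noncomputable section

/-- Partial derivative in the first complex variable. -/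
def pdx (f : ℂ × ℂ → ℂ) (p : ℂ × ℂ) : ℂ := deriv (fun x => f (x, p.2)) p.1

/-- Partial derivative in the second complex variable. -/
def pdy (f : ℂ × ℂ → ℂ) (p : ℂ × ℂ) : ℂ := deriv (fun y => f (p.1, y)) p.2

/-- The Jacobian `J(u₁,u₂) = ∂ₓu₁·∂ᵧu₂ − ∂ₓu₂·∂ᵧu₁`. -/
def Jac (u₁ u₂ : ℂ × ℂ → ℂ) (p : ℂ × ℂ) : ℂ :=
  pdx u₁ p * pdy u₂ p - pdx u₂ p * pdy u₁ p

/-- The GL(3) derivative `{u₁,u₂;x,y}ₓ`. -/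
def brX (u₁ u₂ : ℂ × ℂ → ℂ) (p : ℂ × ℂ) : ℂ :=
  (pdx u₁ p * pdx (pdx u₂) p - pdx u₂ p * pdx (pdx u₁) p) / Jac u₁ u₂ p

/-- The GL(3) derivative `{u₁,u₂;x,y}ᵧ`. -/
def brY (u₁ u₂ : ℂ × ℂ → ℂ) (p : ℂ × ℂ) : ℂ :=
  -(pdy u₁ p * pdy (pdy u₂) p - pdy u₂ p * pdy (pdy u₁) p) / Jac u₁ u₂ p

/-- The GL(3) derivative `[u₁,u₂;x,y]ₓ`. -/
def sqX (u₁ u₂ : ℂ × ℂ → ℂ) (p : ℂ × ℂ) : ℂ :=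
  ((pdy u₁ p * pdx (pdx u₂) p - pdy u₂ p * pdx (pdx u₁) p)
      + 2 * (pdx u₁ p * pdx (pdy u₂) p - pdx u₂ p * pdx (pdy u₁) p)) / Jac u₁ u₂ p

/-- The GL(3) derivative `[u₁,u₂;x,y]ᵧ`. -/
def sqY (u₁ u₂ : ℂ × ℂ → ℂ) (p : ℂ × ℂ) : ℂ :=
  -((pdx u₁ p * pdy (pdy u₂) p - pdx u₂ p * pdy (pdy u₁) p)
      + 2 * (pdy u₁ p * pdx (pdy u₂) p - pdy u₂ p * pdx (pdy u₁) p)) / Jac u₁ u₂ p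

/-- The 4×4 matrix `M(w₁,w₂;x,y)` built from the first partial derivatives of
the holomorphic map `(w₁,w₂)`. -/
def Mmat (w₁ w₂ : ℂ × ℂ → ℂ) (p : ℂ × ℂ) : Matrix (Fin 4) (Fin 4) ℂ :=
  !![(pdx w₁ p) ^ 3, -(pdx w₂ p) ^ 3, (pdx w₁ p) ^ 2 * pdx w₂ p,
        -(pdx w₁ p) * (pdx w₂ p) ^ 2;
     -(pdy w₁ p) ^ 3, (pdy w₂ p) ^ 3, -(pdy w₁ p) ^ 2 * pdy w₂ p,
        (pdy w₁ p) * (pdy w₂ p) ^ 2;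
     3 * (pdx w₁ p) ^ 2 * pdy w₁ p, -3 * (pdx w₂ p) ^ 2 * pdy w₂ p,
        (pdx w₁ p) ^ 2 * pdy w₂ p + 2 * pdx w₁ p * pdx w₂ p * pdy w₁ p,
        -(pdx w₂ p) ^ 2 * pdy w₁ p - 2 * pdx w₁ p * pdx w₂ p * pdy w₂ p;
     -3 * pdx w₁ p * (pdy w₁ p) ^ 2, 3 * pdx w₂ p * (pdy w₂ p) ^ 2,
        -(pdx w₂ p) * (pdy w₁ p) ^ 2 - 2 * pdx w₁ p * pdy w₁ p * pdy w₂ p,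
        (pdx w₁ p) * (pdy w₂ p) ^ 2 + 2 * pdx w₂ p * pdy w₁ p * pdy w₂ p]

/-- The column vector of the four GL(3) derivatives of the pair `(u₁,u₂)`. -/
def Vvec (u₁ u₂ : ℂ × ℂ → ℂ) (p : ℂ × ℂ) : Fin 4 → ℂ :=
  ![brX u₁ u₂ p, brY u₁ u₂ p, sqX u₁ u₂ p, sqY u₁ u₂ p]

/-!
`M(w₁,w₂;x,y)` is the image of the matrix of first partial derivatives of `(w₁,w₂)` under
a multiplicative map `cubicRep` from `2 × 2` to `4 × 4` matrices. By the chain rule the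
partial-derivative matrices of `Φ` at `p` and of `Ψ` at `Φ p` multiply to the identity,
hence so do their images under `cubicRep`.
-/

open Filter Topology

section CubicRep

variable {R : Type*} [CommRing R]

def cubicRep : Matrix (Fin 2) (Fin 2) R →* Matrix (Fin 4) (Fin 4) R where
  toFun P :=
    !![(P 0 0) ^ 3, -(P 0 1) ^ 3, (P 0 0) ^ 2 * P 0 1, -(P 0 0) * (P 0 1) ^ 2;
       -(P 1 0) ^ 3, (P 1 1) ^ 3, -(P 1 0) ^ 2 * P 1 1, (P 1 0) * (P 1 1) ^ 2;
       3 * (P 0 0) ^ 2 * P 1 0, -3 * (P 0 1) ^ 2 * P 1 1,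
          (P 0 0) ^ 2 * P 1 1 + 2 * P 0 0 * P 0 1 * P 1 0,
          -(P 0 1) ^ 2 * P 1 0 - 2 * P 0 0 * P 0 1 * P 1 1;
       -3 * P 0 0 * (P 1 0) ^ 2, 3 * P 0 1 * (P 1 1) ^ 2,
          -(P 0 1) * (P 1 0) ^ 2 - 2 * P 0 0 * P 1 0 * P 1 1,
          (P 0 0) * (P 1 1) ^ 2 + 2 * P 0 1 * P 1 0 * P 1 1]
  map_one' := by
    ext i j
    fin_cases i <;> fin_cases j <;> simp
  map_mul' P Q := by
    ext i j
    fin_cases i <;> fin_cases j <;>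
      simp only [Matrix.mul_apply, Fin.sum_univ_two, Fin.sum_univ_four, of_apply, cons_val',
        cons_val, cons_val_zero, cons_val_one, cons_val_fin_one, Fin.isValue, Fin.zero_eta,
        Fin.mk_one, Fin.reduceFinMk] <;>
      ring

end CubicRep

/-- Rows are indexed by the variable of differentiation, columns by the component, so that
the chain rule reads `partialMatrix (g ∘ w) = partialMatrix w * partialMatrix g`. -/
def partialMatrix (u₁ u₂ : ℂ × ℂ → ℂ) (p : ℂ × ℂ) : Matrix (Fin 2) (Fin 2) ℂ :=
  !![pdx u₁ p, pdx u₂ p; pdy u₁ p, pdy u₂ p]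

theorem Mmat_eq_cubicRep (u₁ u₂ : ℂ × ℂ → ℂ) (p : ℂ × ℂ) :
    Mmat u₁ u₂ p = cubicRep (partialMatrix u₁ u₂ p) :=
  rfl

theorem hasDerivAt_pdx {f : ℂ × ℂ → ℂ} {p : ℂ × ℂ} (hf : DifferentiableAt ℂ f p) :
    HasDerivAt (fun t => f (t, p.2)) (pdx f p) p.1 :=
  (hf.comp p.1 (differentiableAt_id.prodMk (differentiableAt_const p.2))).hasDerivAt

theorem hasDerivAt_pdy {f : ℂ × ℂ → ℂ} {p : ℂ × ℂ} (hf : DifferentiableAt ℂ f p) :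
    HasDerivAt (fun s => f (p.1, s)) (pdy f p) p.2 :=
  (hf.comp p.2 ((differentiableAt_const p.1).prodMk differentiableAt_id)).hasDerivAt

theorem fderiv_apply_eq_pdx_mul_add_pdy_mul {f : ℂ × ℂ → ℂ} {p : ℂ × ℂ}
    (hf : DifferentiableAt ℂ f p) (u v : ℂ) :
    fderiv ℂ f p (u, v) = pdx f p * u + pdy f p * v := by
  have hx : fderiv ℂ f p (1, 0) = pdx f p :=
    (hf.hasFDerivAt.comp_hasDerivAt p.1
      ((hasDerivAt_id p.1).prodMk (hasDerivAt_const p.1 p.2))).unique (hasDerivAt_pdx hf)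
  have hy : fderiv ℂ f p (0, 1) = pdy f p :=
    (hf.hasFDerivAt.comp_hasDerivAt p.2
      ((hasDerivAt_const p.2 p.1).prodMk (hasDerivAt_id p.2))).unique (hasDerivAt_pdy hf)
  have huv : ((u, v) : ℂ × ℂ) = u • (1, 0) + v • (0, 1) := by simp
  rw [huv, map_add, map_smul, map_smul, hx, hy, smul_eq_mul, smul_eq_mul, mul_comm u,
    mul_comm v]

theorem hasDerivAt_comp_prodMk {g : ℂ × ℂ → ℂ} {f₁ f₂ : ℂ → ℂ} {a b t : ℂ}
    (hg : DifferentiableAt ℂ g (f₁ t, f₂ t)) (h₁ : HasDerivAt f₁ a t) (h₂ : HasDerivAt f₂ b t) :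
    HasDerivAt (fun s => g (f₁ s, f₂ s)) (pdx g (f₁ t, f₂ t) * a + pdy g (f₁ t, f₂ t) * b) t := by
  rw [← fderiv_apply_eq_pdx_mul_add_pdy_mul hg]
  exact hg.hasFDerivAt.comp_hasDerivAt t (h₁.prodMk h₂)

section ChainRule

variable {g w₁ w₂ : ℂ × ℂ → ℂ} {p : ℂ × ℂ}

theorem pdx_comp (hg : DifferentiableAt ℂ g (w₁ p, w₂ p)) (h₁ : DifferentiableAt ℂ w₁ p)
    (h₂ : DifferentiableAt ℂ w₂ p) :
    pdx (fun q => g (w₁ q, w₂ q)) p =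
      pdx g (w₁ p, w₂ p) * pdx w₁ p + pdy g (w₁ p, w₂ p) * pdx w₂ p :=
  (hasDerivAt_comp_prodMk hg (hasDerivAt_pdx h₁) (hasDerivAt_pdx h₂)).deriv

theorem pdy_comp (hg : DifferentiableAt ℂ g (w₁ p, w₂ p)) (h₁ : DifferentiableAt ℂ w₁ p)
    (h₂ : DifferentiableAt ℂ w₂ p) :
    pdy (fun q => g (w₁ q, w₂ q)) p =
      pdx g (w₁ p, w₂ p) * pdy w₁ p + pdy g (w₁ p, w₂ p) * pdy w₂ p :=
  (hasDerivAt_comp_prodMk hg (hasDerivAt_pdy h₁) (hasDerivAt_pdy h₂)).deriv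

end ChainRule

theorem Filter.EventuallyEq.pdx_eq {f g : ℂ × ℂ → ℂ} {p : ℂ × ℂ} (h : f =ᶠ[𝓝 p] g) :
    pdx f p = pdx g p :=
  EventuallyEq.deriv_eq <|
    ((continuous_id.prodMk continuous_const).tendsto' p.1 p rfl).eventually h

theorem Filter.EventuallyEq.pdy_eq {f g : ℂ × ℂ → ℂ} {p : ℂ × ℂ} (h : f =ᶠ[𝓝 p] g) :
    pdy f p = pdy g p :=
  EventuallyEq.deriv_eq <|
    ((continuous_const.prodMk continuous_id).tendsto' p.2 p rfl).eventually h

theorem partialMatrix_comp {g₁ g₂ w₁ w₂ : ℂ × ℂ → ℂ} {p : ℂ × ℂ}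
    (hg₁ : DifferentiableAt ℂ g₁ (w₁ p, w₂ p)) (hg₂ : DifferentiableAt ℂ g₂ (w₁ p, w₂ p))
    (h₁ : DifferentiableAt ℂ w₁ p) (h₂ : DifferentiableAt ℂ w₂ p) :
    partialMatrix (fun q => g₁ (w₁ q, w₂ q)) (fun q => g₂ (w₁ q, w₂ q)) p =
      partialMatrix w₁ w₂ p * partialMatrix g₁ g₂ (w₁ p, w₂ p) := by
  rw [partialMatrix, partialMatrix, partialMatrix, Matrix.mul_fin_two, pdx_comp hg₁ h₁ h₂,
    pdx_comp hg₂ h₁ h₂, pdy_comp hg₁ h₁ h₂, pdy_comp hg₂ h₁ h₂]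
  simp only [mul_comm]

theorem Filter.EventuallyEq.partialMatrix_eq {u₁ u₂ v₁ v₂ : ℂ × ℂ → ℂ} {p : ℂ × ℂ}
    (h₁ : u₁ =ᶠ[𝓝 p] v₁) (h₂ : u₂ =ᶠ[𝓝 p] v₂) :
    partialMatrix u₁ u₂ p = partialMatrix v₁ v₂ p := by
  rw [partialMatrix, partialMatrix, h₁.pdx_eq, h₁.pdy_eq, h₂.pdx_eq, h₂.pdy_eq]

theorem partialMatrix_fst_snd (p : ℂ × ℂ) : partialMatrix Prod.fst Prod.snd p = 1 := by
  simp [partialMatrix, pdx, pdy, Matrix.one_fin_two]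

theorem partialMatrix_mul_partialMatrix_eq_one_of_eventually_leftInverse
    {w₁ w₂ x y : ℂ × ℂ → ℂ} {p : ℂ × ℂ}
    (hw₁ : DifferentiableAt ℂ w₁ p) (hw₂ : DifferentiableAt ℂ w₂ p)
    (hx : DifferentiableAt ℂ x (w₁ p, w₂ p)) (hy : DifferentiableAt ℂ y (w₁ p, w₂ p))
    (hleft : ∀ᶠ q in 𝓝 p, (x (w₁ q, w₂ q), y (w₁ q, w₂ q)) = q) :
    partialMatrix w₁ w₂ p * partialMatrix x y (w₁ p, w₂ p) = 1 :=
  calc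
    _ = partialMatrix (fun q => x (w₁ q, w₂ q)) (fun q => y (w₁ q, w₂ q)) p :=
      (partialMatrix_comp hx hy hw₁ hw₂).symm
    _ = partialMatrix Prod.fst Prod.snd p :=
      EventuallyEq.partialMatrix_eq (hleft.mono fun _ hq => congrArg Prod.fst hq)
        (hleft.mono fun _ hq => congrArg Prod.snd hq)
    _ = 1 := partialMatrix_fst_snd p

theorem statement6_general (Ω Ω' : Set (ℂ × ℂ)) (hΩ : IsOpen Ω) (hΩ' : IsOpen Ω')
    (w₁ w₂ x y : ℂ × ℂ → ℂ)
    (hw₁ : DifferentiableOn ℂ w₁ Ω) (hw₂ : DifferentiableOn ℂ w₂ Ω)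
    (hx : DifferentiableOn ℂ x Ω') (hy : DifferentiableOn ℂ y Ω')
    (hmaps : ∀ p ∈ Ω, (w₁ p, w₂ p) ∈ Ω')
    (hleft : ∀ p ∈ Ω, (x (w₁ p, w₂ p), y (w₁ p, w₂ p)) = p) :
    ∀ p ∈ Ω,
      IsUnit (Mmat w₁ w₂ p) ∧
      (Mmat w₁ w₂ p)⁻¹ = Mmat x y (w₁ p, w₂ p) ∧
      Mmat w₁ w₂ p * Mmat x y (w₁ p, w₂ p) = 1 := by
  intro p hp
  have hΩp : Ω ∈ 𝓝 p := hΩ.mem_nhds hp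
  have hΩ'q : Ω' ∈ 𝓝 (w₁ p, w₂ p) := hΩ'.mem_nhds (hmaps p hp)
  have hJ : partialMatrix w₁ w₂ p * partialMatrix x y (w₁ p, w₂ p) = 1 :=
    partialMatrix_mul_partialMatrix_eq_one_of_eventually_leftInverse
      (hw₁.differentiableAt hΩp) (hw₂.differentiableAt hΩp)
      (hx.differentiableAt hΩ'q) (hy.differentiableAt hΩ'q) (eventually_of_mem hΩp hleft)
  have hM : Mmat w₁ w₂ p * Mmat x y (w₁ p, w₂ p) = 1 := by
    rw [Mmat_eq_cubicRep, Mmat_eq_cubicRep, ← map_mul, hJ, map_one]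
  exact ⟨IsUnit.of_mul_eq_one _ hM, Matrix.inv_eq_right_inv hM, hM⟩

/-- For a biholomorphism `Φ = (w₁,w₂)` with inverse `Ψ = (x,y)`,
the matrix `M(w₁,w₂;x,y)` is invertible with inverse `M(x,y;w₁,w₂)` at the image point. -/
theorem statement6 (Ω Ω' : Set (ℂ × ℂ)) (hΩ : IsOpen Ω) (hΩ' : IsOpen Ω')
    (w₁ w₂ x y : ℂ × ℂ → ℂ)
    (hw₁ : DifferentiableOn ℂ w₁ Ω) (hw₂ : DifferentiableOn ℂ w₂ Ω)
    (hx : DifferentiableOn ℂ x Ω') (hy : DifferentiableOn ℂ y Ω')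
    (hmaps : ∀ p ∈ Ω, (w₁ p, w₂ p) ∈ Ω')
    (hmaps' : ∀ q ∈ Ω', (x q, y q) ∈ Ω)
    (hleft : ∀ p ∈ Ω, (x (w₁ p, w₂ p), y (w₁ p, w₂ p)) = p)
    (hright : ∀ q ∈ Ω', (w₁ (x q, y q), w₂ (x q, y q)) = q) :
    ∀ p ∈ Ω,
      IsUnit (Mmat w₁ w₂ p) ∧
      (Mmat w₁ w₂ p)⁻¹ = Mmat x y (w₁ p, w₂ p) ∧
      Mmat w₁ w₂ p * Mmat x y (w₁ p, w₂ p) = 1 :=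
  statement6_general Ω Ω' hΩ hΩ' w₁ w₂ x y hw₁ hw₂ hx hy hmaps hleft
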